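/- arXiv:1608.05912 — 8 statements merged into one kernel-verified Lean document; each statement's English description precedes it below -/
import Mathlib

section
/- Let A be a p-torsion-free commutative ring equipped with a ring endomorphism ψ : A → A satisfying ψ(a) ≡ a^p (mod pA) for all a ∈ A, and let R be a commutative ring such that the p-typical Witt vector ring W(R) is p-torsion free. Then any ring homomorphism g : A → R lifts to a unique ring homomorphism g̃ : A → W(R) such that the composition of g̃ with the projection W(R) → R (the zeroth ghost/Witt component) equals g, and such that g̃ is Frobenius equivariant: F ∘ g̃ = g̃ ∘ ψ, where F is the Witt vector Frobenius. -/
open WittVector Finset Function MvPolynomial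

namespace WittUP



variable (p : ℕ)

section Basic

variable {A : Type*} [CommRing A]

lemma pcan (hA : ∀ a : A, (p : A) * a = 0 → a = 0) :
    ∀ (n : ℕ) (a : A), (p : A) ^ n * a = 0 → a = 0 := by
  intro n
  induction n with
  | zero => intro a h; simpa using h
  | succ n ih =>
    intro a h
    have : (p : A) ^ n * ((p : A) * a) = 0 := by rw [← h]; ring
    exact hA a (ih _ this)

variable [hp : Fact p.Prime]

lemma ghost_sum (x : WittVector p A) (n : ℕ) :
    ghostComponent n x = ∑ i ∈ range (n + 1), (p : A) ^ i * x.coeff i ^ p ^ (n - i) := by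
  rw [ghostComponent_apply, aeval_wittPolynomial]

lemma ghost_inj (hA : ∀ a : A, (p : A) * a = 0 → a = 0) {x y : WittVector p A}
    (h : ∀ n, ghostComponent n x = ghostComponent n y) : x = y := by
  ext n
  induction n using Nat.strong_induction_on with
  | _ n IH =>
    have h' := h n
    rw [ghost_sum, ghost_sum, sum_range_succ, sum_range_succ] at h'
    have hs : ∑ i ∈ range n, (p : A) ^ i * x.coeff i ^ p ^ (n - i)
        = ∑ i ∈ range n, (p : A) ^ i * y.coeff i ^ p ^ (n - i) :=
      sum_congr rfl fun i hi => by rw [IH i (mem_range.mp hi)]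
    rw [hs] at h'
    have h'' : (p : A) ^ n * (x.coeff n - y.coeff n) = 0 := by
      rw [Nat.sub_self, pow_zero, pow_one, pow_one] at h'
      have := add_left_cancel h'
      linear_combination this
    have := pcan p hA n _ h''
    exact sub_eq_zero.mp this

end Basic



open Classical in
noncomputable def dwork (p : ℕ) {A : Type*} [CommRing A] (b : ℕ → A) : ℕ → A
  | n =>
    if h : ∃ z : A, (p : A) ^ n * z =
        b n - ∑ i ∈ (Finset.range n).attach,
          (p : A) ^ (i : ℕ) * dwork p b i ^ p ^ (n - (i : ℕ)) then
      h.choose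
    else 0
  decreasing_by all_goals exact Finset.mem_range.mp i.2

variable (p : ℕ) {A : Type*} [CommRing A]

lemma term_dvd (ψ : A →+* A) (hψ : ∀ a : A, (p : A) ∣ ψ a - a ^ p)
    (c : A) {i n : ℕ} (him : i ≤ n) :
    (p : A) ^ (n + 1) ∣ (p : A) ^ i * (ψ c) ^ p ^ (n - i) - (p : A) ^ i * c ^ p ^ (n + 1 - i) := by
  rw [← mul_sub]
  have h3 := dvd_sub_pow_of_dvd_sub (hψ c) (n - i)
  push_cast at h3
  have he : (c ^ p) ^ p ^ (n - i) = c ^ p ^ (n + 1 - i) := by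
    rw [← pow_mul, ← pow_succ', Nat.succ_sub him]
  rw [he] at h3
  have hsplit : (p : A) ^ (n + 1) = (p : A) ^ i * (p : A) ^ ((n - i) + 1) := by
    rw [← pow_add]; congr 1; omega
  rw [hsplit]
  exact mul_dvd_mul dvd_rfl h3

lemma dwork_spec (ψ : A →+* A) (hψ : ∀ a : A, (p : A) ∣ ψ a - a ^ p)
    (b : ℕ → A) (hb : ∀ n, (p : A) ^ (n + 1) ∣ ψ (b n) - b (n + 1)) :
    ∀ n, b n = ∑ i ∈ range (n + 1), (p : A) ^ i * dwork p b i ^ p ^ (n - i) := by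
  intro n
  induction n using Nat.strong_induction_on with
  | _ n IH =>
    have hex : ∃ z : A, (p : A) ^ n * z =
        b n - ∑ i ∈ range n, (p : A) ^ i * dwork p b i ^ p ^ (n - i) := by
      cases n with
      | zero => exact ⟨b 0, by simp⟩
      | succ m =>
        have h1 : (p : A) ^ (m + 1) ∣ b (m + 1) - ψ (b m) := dvd_sub_comm.mp (hb m)
        have h2 : (p : A) ^ (m + 1) ∣
            ψ (b m) - ∑ i ∈ range (m + 1), (p : A) ^ i * dwork p b i ^ p ^ (m + 1 - i) := by
          rw [IH m (Nat.lt_succ_self m), map_sum, ← Finset.sum_sub_distrib]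
          refine Finset.dvd_sum fun i hi => ?_
          have him : i ≤ m := Nat.lt_succ_iff.mp (mem_range.mp hi)
          have e1 : ψ ((p : A) ^ i * dwork p b i ^ p ^ (m - i))
              = (p : A) ^ i * (ψ (dwork p b i)) ^ p ^ (m - i) := by
            rw [map_mul, map_pow, map_pow, map_natCast]
          rw [e1]
          exact term_dvd p ψ hψ _ him
        have key := dvd_add h1 h2
        rw [sub_add_sub_cancel] at key
        obtain ⟨t, ht⟩ := key
        exact ⟨t, ht.symm⟩
    have hex' : ∃ z : A, (p : A) ^ n * z =
        b n - ∑ i ∈ (Finset.range n).attach,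
          (p : A) ^ (i : ℕ) * dwork p b i ^ p ^ (n - (i : ℕ)) := by
      obtain ⟨z, hz⟩ := hex
      exact ⟨z, by rw [Finset.sum_attach (range n)
        (fun i => (p : A) ^ i * dwork p b i ^ p ^ (n - i))]; exact hz⟩
    have hval' : (p : A) ^ n * dwork p b n =
        b n - ∑ i ∈ (Finset.range n).attach,
          (p : A) ^ (i : ℕ) * dwork p b i ^ p ^ (n - (i : ℕ)) := by
      conv_lhs => rw [dwork, dif_pos hex']
      exact hex'.choose_spec
    have hval : (p : A) ^ n * dwork p b n =
        b n - ∑ i ∈ range n, (p : A) ^ i * dwork p b i ^ p ^ (n - i) := by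
      rw [hval', Finset.sum_attach (range n)
        (fun i => (p : A) ^ i * dwork p b i ^ p ^ (n - i))]
    rw [sum_range_succ, Nat.sub_self, pow_zero, pow_one]
    linear_combination -hval

lemma dwork_exists [hp : Fact p.Prime] (ψ : A →+* A) (hψ : ∀ a : A, (p : A) ∣ ψ a - a ^ p)
    (b : ℕ → A) (hb : ∀ n, (p : A) ^ (n + 1) ∣ ψ (b n) - b (n + 1)) :
    ∃ x : WittVector p A, ∀ n, ghostComponent n x = b n := by
  refine ⟨WittVector.mk p (dwork p b), fun n => ?_⟩
  rw [ghostComponent_apply, aeval_wittPolynomial]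
  simp only [WittVector.coeff_mk]
  exact (dwork_spec p ψ hψ b hb n).symm



variable (p : ℕ)

section Cong

variable {A : Type*} [CommRing A]

lemma pow_p_dvd_step [hp : Fact p.Prime] {a c : A} {m : ℕ} (hm : 1 ≤ m)
    (h : (p : A) ^ m ∣ a - c) : (p : A) ^ (m + 1) ∣ a ^ p - c ^ p := by
  have hg := geom_sum₂_mul a c p
  rw [← hg, pow_succ']
  refine mul_dvd_mul ?_ h
  have hab : (p : A) ∣ a - c := dvd_trans (by simpa using pow_dvd_pow (p : A) hm) h
  have h4 : ∑ i ∈ range p, (a ^ i * c ^ (p - 1 - i) - c ^ (p - 1))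
      = (∑ i ∈ range p, a ^ i * c ^ (p - 1 - i)) - (p : A) * c ^ (p - 1) := by
    rw [Finset.sum_sub_distrib, Finset.sum_const, card_range, nsmul_eq_mul]
  have h5 : (p : A) ∣ ∑ i ∈ range p, (a ^ i * c ^ (p - 1 - i) - c ^ (p - 1)) := by
    refine Finset.dvd_sum fun i hi => ?_
    have hip : i ≤ p - 1 := by
      have := mem_range.mp hi; have := hp.out.pos; omega
    have he : a ^ i * c ^ (p - 1 - i) - c ^ (p - 1) = (a ^ i - c ^ i) * c ^ (p - 1 - i) := by
      rw [sub_mul, ← pow_add]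
      congr 2
      omega
    rw [he]
    exact dvd_mul_of_dvd_left (dvd_trans hab (sub_dvd_pow_sub_pow a c i)) _
  rw [h4] at h5
  have := dvd_add h5 (dvd_mul_right (p : A) (c ^ (p - 1)))
  rwa [sub_add_cancel] at this
end Cong

section Nat

variable {R₁ R₂ : Type*} [CommRing R₁] [CommRing R₂]

lemma hom_aeval (f : R₁ →+* R₂) (c : ℕ → R₁) (φ : MvPolynomial ℕ ℤ) :
    f (aeval c φ) = aeval (fun i => f (c i)) φ := by
  rw [aeval_def, aeval_def, eval₂_comp_left f]
  congr 1
  exact Subsingleton.elim _ _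

variable [hp : Fact p.Prime]

lemma coeff_fun_map (f : R₁ →+* R₂) (x : WittVector p R₁) :
    (WittVector.map f x).coeff = fun n => f (x.coeff n) :=
  funext fun n => WittVector.map_coeff f x n

lemma map_frobenius' (f : R₁ →+* R₂) (x : WittVector p R₁) :
    WittVector.map f (WittVector.frobenius x) = WittVector.frobenius (WittVector.map f x) := by
  ext n
  rw [WittVector.map_coeff, WittVector.coeff_frobenius, WittVector.coeff_frobenius,
    hom_aeval, coeff_fun_map]

lemma ghost_nat (f : R₁ →+* R₂) (x : WittVector p R₁) (n : ℕ) :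
    ghostComponent n (WittVector.map f x) = f (ghostComponent n x) := by
  rw [ghostComponent_apply, ghostComponent_apply, hom_aeval, coeff_fun_map]

lemma head_eq (x : WittVector p R₁) : WittVector.constantCoeff x = x.coeff 0 := rfl

lemma ghost_zero (x : WittVector p R₁) : ghostComponent 0 x = x.coeff 0 := by
  rw [ghostComponent_apply, wittPolynomial_zero, aeval_X]

lemma head_iter (x : WittVector p R₁) (n : ℕ) :
    WittVector.constantCoeff (WittVector.frobenius^[n] x) = ghostComponent n x := by
  induction n generalizing x with
  | zero => simp [head_eq, ghost_zero]
  | succ n ih =>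
    rw [Function.iterate_succ_apply, ih, ghostComponent_frobenius]

lemma map_iter (f : R₁ →+* R₂) (x : WittVector p R₁) (n : ℕ) :
    WittVector.map f (WittVector.frobenius^[n] x)
      = WittVector.frobenius^[n] (WittVector.map f x) := by
  induction n generalizing x with
  | zero => rfl
  | succ n ih =>
    rw [Function.iterate_succ_apply, ih, map_frobenius', Function.iterate_succ_apply]

end Nat



variable (p : ℕ)

section SLemmas

variable [hp : Fact p.Prime]

lemma S_tf (R : Type*) [CommRing R] :
    ∀ f : MvPolynomial R ℤ, (p : MvPolynomial R ℤ) * f = 0 → f = 0 := by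
  intro f h
  have hp0 : (p : MvPolynomial R ℤ) = C (p : ℤ) :=
    (map_natCast (C : ℤ →+* MvPolynomial R ℤ) p).symm
  ext m
  have hc := congrArg (MvPolynomial.coeff m) h
  rw [hp0, coeff_C_mul, coeff_zero] at hc
  rcases mul_eq_zero.mp hc with h' | h'
  · exact absurd h' (by exact_mod_cast hp.out.ne_zero)
  · simpa using h'

lemma bind_pow_char {σ : Type*} (f : MvPolynomial σ (ZMod p)) :
    bind₁ (fun i => (X i : MvPolynomial σ (ZMod p)) ^ p) f = f ^ p := by
  induction f using MvPolynomial.induction_on with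
  | C a => rw [bind₁_C_right, ← C_pow, ZMod.pow_card]
  | add f g hf hg => rw [map_add, hf, hg, add_pow_char]
  | mul_X f i hf => rw [map_mul, hf, bind₁_X_right, mul_pow]

/-- The Frobenius lift on `MvPolynomial R ℤ`. -/
noncomputable def psiS (R : Type*) [CommRing R] : MvPolynomial R ℤ →+* MvPolynomial R ℤ :=
  (bind₁ fun i => (X i : MvPolynomial R ℤ) ^ p).toRingHom

lemma S_frobLift (R : Type*) [CommRing R] :
    ∀ f : MvPolynomial R ℤ, (p : MvPolynomial R ℤ) ∣ psiS p R f - f ^ p := by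
  intro f
  have hp0 : (p : MvPolynomial R ℤ) = C (p : ℤ) :=
    (map_natCast (C : ℤ →+* MvPolynomial R ℤ) p).symm
  rw [hp0, C_dvd_iff_dvd_coeff]
  intro m
  have hm : MvPolynomial.coeff m (map (Int.castRingHom (ZMod p)) (psiS p R f - f ^ p)) = 0 := by
    rw [map_sub, map_pow]
    show MvPolynomial.coeff m (map (Int.castRingHom (ZMod p))
      ((bind₁ fun i => (X i : MvPolynomial R ℤ) ^ p) f)
      - map (Int.castRingHom (ZMod p)) f ^ p) = 0
    rw [map_bind₁]
    simp only [map_pow, map_X]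
    rw [bind_pow_char, sub_self, MvPolynomial.coeff_zero]
  rw [MvPolynomial.coeff_map] at hm
  exact (ZMod.intCast_zmod_eq_zero_iff_dvd _ p).mp hm

lemma Wtf {A : Type*} [CommRing A] (hA : ∀ a : A, (p : A) * a = 0 → a = 0) :
    ∀ x : WittVector p A, (p : WittVector p A) * x = 0 → x = 0 := by
  intro x h
  refine ghost_inj p hA fun n => ?_
  have hg := congrArg (ghostComponent n) h
  rw [map_mul, map_natCast, map_zero] at hg
  rw [map_zero]
  exact hA _ hg

lemma claim1 {S : Type*} [CommRing S] (ψ : S →+* S) (hψ : ∀ a : S, (p : S) ∣ ψ a - a ^ p)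
    (x : WittVector p S) (n : ℕ) :
    (p : S) ^ (n + 1) ∣ ψ (ghostComponent n x) - ghostComponent (n + 1) x := by
  rw [ghost_sum, ghost_sum, map_sum, sum_range_succ
    (f := fun i => (p : S) ^ i * x.coeff i ^ p ^ (n + 1 - i)), Nat.sub_self, pow_zero, pow_one,
    sub_add_eq_sub_sub]
  refine dvd_sub ?_ (dvd_mul_right _ _)
  rw [← Finset.sum_sub_distrib]
  refine Finset.dvd_sum fun i hi => ?_
  have him : i ≤ n := Nat.lt_succ_iff.mp (mem_range.mp hi)
  have e1 : ψ ((p : S) ^ i * x.coeff i ^ p ^ (n - i))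
      = (p : S) ^ i * (ψ (x.coeff i)) ^ p ^ (n - i) := by
    rw [map_mul, map_pow, map_pow, map_natCast]
  rw [e1]
  exact term_dvd p ψ hψ _ him

lemma frobLiftW {S : Type*} [CommRing S] (hS : ∀ a : S, (p : S) * a = 0 → a = 0)
    (ψ : S →+* S) (hψ : ∀ a : S, (p : S) ∣ ψ a - a ^ p) (x : WittVector p S) :
    (p : WittVector p S) ∣ WittVector.frobenius x - x ^ p := by
  have h1 : ∀ n, ∃ c, ghostComponent (n + 1) x - (ghostComponent n x) ^ p = (p : S) * c := by
    intro n
    have d1 : (p : S) ∣ ψ (ghostComponent n x) - ghostComponent (n + 1) x :=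
      dvd_trans (dvd_pow_self (p : S) (Nat.succ_ne_zero n)) (claim1 p ψ hψ x n)
    have d2 := hψ (ghostComponent n x)
    have heq : ghostComponent (n + 1) x - (ghostComponent n x) ^ p
        = (ψ (ghostComponent n x) - (ghostComponent n x) ^ p)
          - (ψ (ghostComponent n x) - ghostComponent (n + 1) x) := by ring
    rw [heq]
    exact dvd_sub d2 d1
  choose e he using h1
  have he_cond : ∀ n, (p : S) ^ (n + 1) ∣ ψ (e n) - e (n + 1) := by
    intro n
    have E1 : ψ (ghostComponent (n + 1) x) - (ψ (ghostComponent n x)) ^ p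
        = (p : S) * ψ (e n) := by
      have hE := congrArg ψ (he n)
      rw [map_sub, map_pow, map_mul, map_natCast] at hE
      exact hE
    have E2 := he (n + 1)
    have hmul : (p : S) * (ψ (e n) - e (n + 1))
        = (ψ (ghostComponent (n + 1) x) - ghostComponent (n + 2) x)
          - ((ψ (ghostComponent n x)) ^ p - (ghostComponent (n + 1) x) ^ p) := by
      linear_combination E2 - E1
    have hdvd : (p : S) ^ (n + 2) ∣ (p : S) * (ψ (e n) - e (n + 1)) := by
      rw [hmul]
      exact dvd_sub (claim1 p ψ hψ x (n + 1))
        (pow_p_dvd_step p (m := n + 1) (by omega) (claim1 p ψ hψ x n))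
    obtain ⟨t, ht⟩ := hdvd
    refine ⟨t, ?_⟩
    have h0 : (p : S) * ((ψ (e n) - e (n + 1)) - (p : S) ^ (n + 1) * t) = 0 := by
      linear_combination ht
    exact sub_eq_zero.mp (hS _ h0)
  obtain ⟨c, hc⟩ := dwork_exists p ψ hψ e he_cond
  refine ⟨c, ?_⟩
  refine ghost_inj p hS fun n => ?_
  rw [map_sub, map_pow, ghostComponent_frobenius, map_mul, map_natCast, hc n]
  exact he n

lemma headInj {R : Type*} [CommRing R]
    (hWR : ∀ x : WittVector p R, (p : WittVector p R) * x = 0 → x = 0)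
    (x : WittVector p R) (u : WittVector p (WittVector p R))
    (hu : ∀ n, ghostComponent n u = WittVector.frobenius^[n] x) :
    WittVector.map WittVector.constantCoeff u = x := by
  let π : MvPolynomial R ℤ →+* R := (MvPolynomial.aeval (fun r : R => r)).toRingHom
  have hπ : Function.Surjective π := fun r => ⟨X r, by simp [π]⟩
  obtain ⟨y, hy⟩ := WittVector.map_surjective π hπ x
  have hFlift : ∀ z : WittVector p (MvPolynomial R ℤ),
      (p : WittVector p (MvPolynomial R ℤ)) ∣ WittVector.frobenius z - z ^ p :=
    frobLiftW p (S_tf p R) (psiS p R) (S_frobLift p R)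
  obtain ⟨v, hv⟩ := dwork_exists p (WittVector.frobenius) hFlift
    (fun n => WittVector.frobenius^[n] y)
    (fun n => by simp [Function.iterate_succ_apply'])
  have hu2 : u = WittVector.map (WittVector.map π) v := by
    refine ghost_inj p hWR fun n => ?_
    rw [hu n, ghost_nat, hv n, map_iter, hy]
  have hv0 : WittVector.map WittVector.constantCoeff v = y := by
    refine ghost_inj p (S_tf p R) fun n => ?_
    rw [ghost_nat, hv n, head_iter]
  rw [hu2]
  ext n
  rw [WittVector.map_coeff, WittVector.map_coeff, head_eq, WittVector.map_coeff,
    ← head_eq, ← WittVector.map_coeff WittVector.constantCoeff, hv0,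
    ← WittVector.map_coeff π, hy]

end SLemmas


end WittUP


/-- Universal property of the p-typical Witt vectors: if `A` is `p`-torsion free with a
Frobenius lift `ψ` and `W(R)` is `p`-torsion free, then every ring homomorphism
`g : A → R` has a unique Frobenius-equivariant lift `g̃ : A → W(R)` with
`constantCoeff ∘ g̃ = g`. -/
theorem witt_universal_property (p : ℕ) [hp : Fact p.Prime]
    (A R : Type*) [CommRing A] [CommRing R]
    (hA : ∀ a : A, (p : A) * a = 0 → a = 0)
    (ψ : A →+* A) (hψ : ∀ a : A, ∃ b : A, ψ a = a ^ p + p * b)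
    (hWR : ∀ x : WittVector p R, (p : WittVector p R) * x = 0 → x = 0)
    (g : A →+* R) :
    ∃! gt : A →+* WittVector p R,
      (WittVector.constantCoeff.comp gt = g) ∧
      (∀ a : A, WittVector.frobenius (gt a) = gt (ψ a)) := by
  classical
  have hψ' : ∀ a : A, (p : A) ∣ ψ a - a ^ p := by
    intro a
    obtain ⟨b, hb⟩ := hψ a
    exact ⟨b, by rw [hb]; ring⟩
  have hex : ∀ a : A, ∃ x : WittVector p A, ∀ n, ghostComponent n x = ψ^[n] a := by
    intro a
    exact WittUP.dwork_exists p ψ hψ' (fun n => ψ^[n] a)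
      (fun n => by simp [Function.iterate_succ_apply'])
  choose t ht using hex
  let sA : A →+* WittVector p A :=
    { toFun := t
      map_one' := WittUP.ghost_inj p hA fun n => by
        rw [ht, map_one, iterate_map_one]
      map_mul' := fun a b => WittUP.ghost_inj p hA fun n => by
        rw [ht, map_mul, ht, ht, iterate_map_mul]
      map_zero' := WittUP.ghost_inj p hA fun n => by
        rw [ht, map_zero, iterate_map_zero]
      map_add' := fun a b => WittUP.ghost_inj p hA fun n => by
        rw [ht, map_add, ht, ht, iterate_map_add] }
  have hsA : ∀ a n, ghostComponent n (sA a) = ψ^[n] a := ht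
  have hsA0 : ∀ a, (sA a).coeff 0 = a := by
    intro a
    have := hsA a 0
    rwa [WittUP.ghost_zero] at this
  refine ⟨(WittVector.map g).comp sA, ⟨?_, ?_⟩, ?_⟩
  · refine RingHom.ext fun a => ?_
    simp only [RingHom.comp_apply]
    rw [WittUP.head_eq, WittVector.map_coeff, hsA0]
  · intro a
    simp only [RingHom.comp_apply]
    rw [← WittUP.map_frobenius']
    congr 1
    refine WittUP.ghost_inj p hA fun n => ?_
    rw [ghostComponent_frobenius, hsA, hsA]
    exact Function.iterate_succ_apply ψ n a
  · rintro gt ⟨hc, hF⟩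
    refine RingHom.ext fun a => ?_
    have hiter : ∀ n, WittVector.frobenius^[n] (gt a) = gt (ψ^[n] a) := by
      intro n
      induction n with
      | zero => rfl
      | succ n ihn =>
        rw [Function.iterate_succ_apply', ihn, hF, ← Function.iterate_succ_apply' ψ n a]
    have hu : ∀ n, ghostComponent n (WittVector.map gt (sA a))
        = WittVector.frobenius^[n] (gt a) := by
      intro n
      rw [WittUP.ghost_nat, hsA, hiter]
    have hmain := WittUP.headInj p hWR (gt a) (WittVector.map gt (sA a)) hu
    rw [← hmain]
    ext n
    simp only [RingHom.comp_apply]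
    rw [WittVector.map_coeff, WittVector.map_coeff, WittVector.map_coeff]
    exact RingHom.congr_fun hc ((sA a).coeff n)
end

section
/- Let A be a p-torsion-free commutative ring with a Frobenius lift ψ, R a ring with W(R) p-torsion free, and g : A → R a ring homomorphism. Then the unique Frobenius-equivariant lift g̃ : A → W(R) of g has ghost components gh_n(g̃(a)) = g(ψ^n(a)) for all n ≥ 0 and a ∈ A, where gh_n : W(R) → R is the n-th ghost component map. -/
open WittVector

/-- The unique Frobenius-equivariant lift `g̃ : A → W(R)` of `g : A → R` has ghost
components `gh_n (g̃ a) = g (ψ^n a)`. -/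
theorem ghost_components_of_canonical_lift (p : ℕ) [hp : Fact p.Prime]
    (A R : Type*) [CommRing A] [CommRing R]
    (hA : ∀ a : A, (p : A) * a = 0 → a = 0)
    (ψ : A →+* A) (hψ : ∀ a : A, ∃ b : A, ψ a = a ^ p + p * b)
    (hWR : ∀ x : WittVector p R, (p : WittVector p R) * x = 0 → x = 0)
    (g : A →+* R) (gt : A →+* WittVector p R)
    (h0 : WittVector.constantCoeff.comp gt = g)
    (hF : ∀ a : A, WittVector.frobenius (gt a) = gt (ψ a)) :
    ∀ (n : ℕ) (a : A), WittVector.ghostComponent n (gt a) = g ((⇑ψ)^[n] a) := by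
  intro n
  induction n with
  | zero =>
    intro a
    have := RingHom.congr_fun h0 a
    simpa [WittVector.ghostComponent_apply, wittPolynomial_zero] using this
  | succ n ih =>
    intro a
    rw [← WittVector.ghostComponent_frobenius, hF, ih, Function.iterate_succ_apply]
end

section
/- If R is a p-torsion-free commutative ring, then the ring of p-typical Witt vectors W(R) is p-torsion free. -/
/-- If `R` is `p`-torsion free, then so is the ring of `p`-typical Witt vectors `W(R)`. -/
theorem wittVector_p_torsion_free (p : ℕ) [hp : Fact p.Prime]
    (R : Type*) [CommRing R]
    (hR : ∀ r : R, (p : R) * r = 0 → r = 0) :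
    ∀ x : WittVector p R, (p : WittVector p R) * x = 0 → x = 0 := by
  have hRpow : ∀ (n : ℕ) (r : R), (p : R) ^ n * r = 0 → r = 0 := by
    intro n
    induction n with
    | zero => intro r hr; simpa using hr
    | succ k ih =>
      intro r hr
      rw [pow_succ', mul_assoc] at hr
      exact ih r (hR _ hr)
  intro x hx
  have hg : ∀ n, WittVector.ghostComponent n x = 0 := by
    intro n
    apply hR
    have := congrArg (WittVector.ghostComponent (p := p) n) hx
    rwa [map_mul, map_natCast, map_zero] at this
  ext n
  induction n using Nat.strong_induction_on with
  | _ n ih =>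
    have h := hg n
    rw [WittVector.ghostComponent_apply, aeval_wittPolynomial] at h
    rw [Finset.sum_eq_single n] at h
    · simp only [Nat.sub_self, pow_zero, pow_one] at h
      simpa using hRpow n _ h
    · intro i hi hne
      have hlt : i < n := lt_of_le_of_ne (Nat.lt_succ_iff.mp (Finset.mem_range.mp hi)) hne
      simp [ih i hlt, zero_pow (pow_pos hp.out.pos (n - i)).ne']
    · intro hn; exact absurd (Finset.self_mem_range_succ n) hn
end

section
/- For every Witt vector x in the truncated Witt ring W_{n+1}(R) of a commutative ring R, the Frobenius F(x) ∈ W_n(R) satisfies F(x) ≡ r(x)^p (mod p·W_n(R)), where r : W_{n+1}(R) → W_n(R) is the truncation (restriction) map. -/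
/-!
Write `X = [x₀] + V B` with `[x₀]` the Teichmüller lift of the constant coefficient. Then
`F X = [x₀]ᵖ + p B` since `F [x₀] = [x₀ᵖ]` and `F V = p`, while `Xᵖ ≡ [x₀]ᵖ + (V B)ᵖ (mod p)` and
`(V B)² = p V(B²)`. Hence `F X ≡ Xᵖ (mod p)` in `W(R)`, and truncating gives the claim.
-/

open WittVector

namespace WittVector

variable {p : ℕ} [hp : Fact p.Prime] {R : Type*} [CommRing R]

local notation "𝕎" => WittVector p

private theorem frobenius_teichmuller_of_invertible [Invertible (p : R)] (r : R) :
    frobenius (teichmuller p r) = teichmuller p (r ^ p) := by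
  apply (ghostMap.bijective_of_invertible p R).1
  funext n
  rw [ghostMap_apply, ghostMap_apply, ghostComponent_frobenius, ghostComponent_teichmuller,
    ghostComponent_teichmuller, ← pow_mul, ← pow_succ']

private theorem frobenius_teichmuller_mvPolynomial {σ : Type*} (r : MvPolynomial σ ℤ) :
    frobenius (teichmuller p r) = teichmuller p (r ^ p) := by
  refine map_injective (MvPolynomial.map (Int.castRingHom ℚ))
    (MvPolynomial.map_injective _ Int.cast_injective) ?_
  rw [map_teichmuller, (frobenius_isPoly p).map, map_teichmuller, map_pow,
    frobenius_teichmuller_of_invertible]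

theorem frobenius_teichmuller (r : R) :
    frobenius (teichmuller p r) = teichmuller p r ^ p := by
  obtain ⟨r, rfl⟩ := MvPolynomial.counit_surjective R r
  rw [← map_teichmuller, ← (frobenius_isPoly p).map, frobenius_teichmuller_mvPolynomial,
    map_pow, map_pow]

theorem teichmuller_add_verschiebung_shift (x : 𝕎 R) :
    teichmuller p (x.coeff 0) + verschiebung (x.shift 1) = x := by
  ext (_ | n) <;>
    rw [coeff_add_of_disjoint _ _ _ (by rintro (_ | _) <;> simp [verschiebung_coeff_zero])]
  · rw [teichmuller_coeff_zero, verschiebung_coeff_zero, add_zero]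
  · rw [teichmuller_coeff_pos _ _ _ n.succ_pos, verschiebung_coeff_succ, shift_coeff, zero_add,
      add_comm]

theorem verschiebung_mul_verschiebung (x y : 𝕎 R) :
    verschiebung x * verschiebung y = p * verschiebung (x * y) := by
  rw [← verschiebung_mul_frobenius, frobenius_verschiebung, ← mul_assoc, mul_comm _ (p : 𝕎 R),
    ← nsmul_eq_mul, map_nsmul, nsmul_eq_mul]

theorem natCast_dvd_verschiebung_pow (x : 𝕎 R) {k : ℕ} (hk : 2 ≤ k) :
    (p : 𝕎 R) ∣ verschiebung x ^ k :=
  calc (p : 𝕎 R) ∣ verschiebung x ^ 2 := by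
        rw [sq, verschiebung_mul_verschiebung]; exact dvd_mul_right _ _
    _ ∣ verschiebung x ^ k := pow_dvd_pow _ hk

theorem natCast_dvd_frobenius_sub_pow (x : 𝕎 R) : (p : 𝕎 R) ∣ frobenius x - x ^ p := by
  rw [← teichmuller_add_verschiebung_shift x]
  obtain ⟨c, hc⟩ := exists_add_pow_prime_eq hp.out (teichmuller p (x.coeff 0))
    (verschiebung (x.shift 1))
  obtain ⟨d, hd⟩ := natCast_dvd_verschiebung_pow (x.shift 1) hp.out.two_le
  refine ⟨x.shift 1 - d - teichmuller p (x.coeff 0) * verschiebung (x.shift 1) * c, ?_⟩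
  rw [map_add, frobenius_teichmuller, frobenius_verschiebung, hc, hd]
  ring

end WittVector

/-- `F(x)` is computed through an arbitrary lift `X ∈ W(R)` of `x`, as `W_n` is a quotient of `W`. -/
theorem truncated_frobenius_congruence (p : ℕ) [hp : Fact p.Prime]
    (R : Type*) [CommRing R] (n : ℕ) :
    ∀ x : TruncatedWittVector p (n + 1) R, ∀ X : WittVector p R,
      WittVector.truncate (n + 1) X = x →
      ∃ y : TruncatedWittVector p n R,
        WittVector.truncate n (WittVector.frobenius X) =
          (TruncatedWittVector.truncate (Nat.le_succ n) x) ^ p +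
            (p : TruncatedWittVector p n R) * y := by
  rintro x X rfl
  obtain ⟨Y, hY⟩ := natCast_dvd_frobenius_sub_pow X
  refine ⟨truncate n Y, ?_⟩
  rw [eq_add_of_sub_eq' hY, map_add, map_mul, map_pow, map_natCast,
    TruncatedWittVector.truncate_wittVector_truncate]
end

section
/- If p is nilpotent in a commutative ring R, then for every n, p is nilpotent in the truncated Witt vector ring W_n(R). More precisely, if p^{m+1} = 0 in R then p^{m+n+1} = 0 in W_n(R) (with W_n of length n+1, components indexed 0,…,n). -/
open Finset

/-- Key divisibility over `ℤ`: the `i`-th coefficient of `p^k` in `𝕎 ℤ` is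
divisible by `p^(k-i)`. -/
private lemma witt_coeff_p_pow_dvd (p : ℕ) [hp : Fact p.Prime] (k : ℕ) :
    ∀ i : ℕ, i < k → (p : ℤ) ^ (k - i) ∣ ((p : WittVector p ℤ) ^ k).coeff i := by
  intro i
  induction i using Nat.strong_induction_on with
  | _ i ih =>
    intro hik
    have hg : WittVector.ghostComponent i ((p : WittVector p ℤ) ^ k) = (p : ℤ) ^ k := by
      rw [map_pow, map_natCast]
    rw [WittVector.ghostComponent_apply, aeval_wittPolynomial, Finset.sum_range_succ] at hg
    have hterm : ∀ j ∈ Finset.range i,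
        (p : ℤ) ^ k ∣ (p : ℤ) ^ j * ((p : WittVector p ℤ) ^ k).coeff j ^ p ^ (i - j) := by
      intro j hj
      rw [Finset.mem_range] at hj
      have hjk : j < k := lt_trans hj hik
      obtain ⟨d, hd⟩ := ih j hj hjk
      rw [hd, mul_pow, ← pow_mul, ← mul_assoc, ← pow_add]
      refine Dvd.dvd.mul_right (pow_dvd_pow _ ?_) _
      calc k = j + (k - j) * 1 := by omega
        _ ≤ j + (k - j) * p ^ (i - j) := by
            gcongr
            exact Nat.one_le_iff_ne_zero.mpr (pow_ne_zero _ hp.out.ne_zero)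
    have hsum : (p : ℤ) ^ k ∣ ∑ j ∈ Finset.range i,
        (p : ℤ) ^ j * ((p : WittVector p ℤ) ^ k).coeff j ^ p ^ (i - j) :=
      Finset.dvd_sum hterm
    have h2 : (p : ℤ) ^ k ∣ (p : ℤ) ^ i * ((p : WittVector p ℤ) ^ k).coeff i ^ p ^ (i - i) := by
      have := (dvd_sub_right hsum).mpr (dvd_refl ((p : ℤ) ^ k))
      -- p^i * c_i = p^k - sum
      have heq : (p : ℤ) ^ i * ((p : WittVector p ℤ) ^ k).coeff i ^ p ^ (i - i)
          = (p : ℤ) ^ k - ∑ j ∈ Finset.range i,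
            (p : ℤ) ^ j * ((p : WittVector p ℤ) ^ k).coeff j ^ p ^ (i - j) := by
        linarith [hg]
      rw [heq]
      exact dvd_sub (dvd_refl _) hsum
    rw [Nat.sub_self, pow_zero, pow_one] at h2
    have hpk : (p : ℤ) ^ k = (p : ℤ) ^ i * (p : ℤ) ^ (k - i) := by
      rw [← pow_add]; congr 1; omega
    rw [hpk] at h2
    exact (mul_dvd_mul_iff_left (pow_ne_zero i (by exact_mod_cast hp.out.ne_zero))).mp h2

/-- If `p` is nilpotent in `R`, then `p` is nilpotent in every truncated Witt vector ring
`W_n(R)`; more precisely, if `p^(m+1) = 0` in `R` then `p^(m+n+1) = 0` in `W_n(R)`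
(where `W_n` has components indexed `0, …, n`, i.e. length `n+1`). -/
theorem p_nilpotent_in_truncatedWittVector (p : ℕ) [hp : Fact p.Prime]
    (R : Type*) [CommRing R] :
    (∀ n : ℕ, IsNilpotent (p : R) → IsNilpotent (p : TruncatedWittVector p n R)) ∧
    (∀ m n : ℕ, (p : R) ^ (m + 1) = 0 →
      (p : TruncatedWittVector p (n + 1) R) ^ (m + n + 1) = 0) := by
  have key : ∀ m n : ℕ, (p : R) ^ (m + 1) = 0 →
      (p : TruncatedWittVector p (n + 1) R) ^ (m + n + 1) = 0 := by
    intro m n hm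
    have hcoeff : ∀ i : ℕ, i ≤ n → ((p : WittVector p R) ^ (m + n + 1)).coeff i = 0 := by
      intro i hi
      have hmap : (p : WittVector p R) ^ (m + n + 1)
          = WittVector.map (Int.castRingHom R) ((p : WittVector p ℤ) ^ (m + n + 1)) := by
        rw [map_pow, map_natCast]
      obtain ⟨d, hd⟩ := witt_coeff_p_pow_dvd p (m + n + 1) i (by omega)
      rw [hmap, WittVector.map_coeff, hd, map_mul, map_pow, map_natCast]
      have : (p : R) ^ (m + n + 1 - i) = 0 := by
        have h : m + n + 1 - i = (m + 1) + (n - i) := by omega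
        rw [h, pow_add, hm, zero_mul]
      rw [this, zero_mul]
    have htr : (p : TruncatedWittVector p (n + 1) R) ^ (m + n + 1)
        = WittVector.truncate (n + 1) ((p : WittVector p R) ^ (m + n + 1)) := by
      rw [map_pow, map_natCast]
    rw [htr]
    apply TruncatedWittVector.ext
    intro i
    rw [WittVector.coeff_truncate, hcoeff i (by omega), TruncatedWittVector.coeff_zero]
  refine ⟨?_, key⟩
  rintro n ⟨k, hk⟩
  have hk1 : (p : R) ^ (k + 1) = 0 := by rw [pow_succ, hk, zero_mul]
  cases n with
  | zero => exact ⟨1, TruncatedWittVector.ext fun i => i.elim0⟩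
  | succ n => exact ⟨k + n + 1, key k n hk1⟩
end

section
/- Let R be a commutative ring and f ∈ R. Then for each n, the natural map W_n(R) → W_n(R[1/f]) induced by localization identifies W_n(R[1/f]) with the localization W_n(R)[1/[f]], where [f] ∈ W_n(R) is the Teichmüller lift of f. That is, the induced map W_n(R)[1/[f]] → W_n(R[1/f]) is an isomorphism of rings. -/
open WittVector

/-- Functoriality of truncated Witt vectors: the ring homomorphism
`W_n(R) → W_n(S)` induced by `f : R →+* S`. -/
noncomputable def twMap {p : ℕ} [hp : Fact p.Prime] {R S : Type*} [CommRing R] [CommRing S]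
    (n : ℕ) (f : R →+* S) :
    TruncatedWittVector p n R →+* TruncatedWittVector p n S :=
  RingHom.liftOfRightInverse (WittVector.truncate n) TruncatedWittVector.out
    (fun x => by ext i; rw [WittVector.coeff_truncate, TruncatedWittVector.coeff_out])
    ⟨(WittVector.truncate n).comp (WittVector.map f), fun x hx => by
      rw [WittVector.mem_ker_truncate] at hx
      rw [RingHom.mem_ker, RingHom.comp_apply]
      have : ∀ i < n, (WittVector.map f x).coeff i = 0 := by
        intro i hi
        rw [WittVector.map_coeff, hx i hi, map_zero]
      ext i
      rw [WittVector.coeff_truncate, this i i.is_lt, TruncatedWittVector.coeff_zero]⟩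

/-!
Multiplication by a Teichmüller lift acts coordinatewise: `([a] * x)ᵢ = a ^ p ^ i * xᵢ`. This is
a universal identity, checked on ghost components where `p` is invertible and transported to all
rings through `ℤ`-polynomial rings. Since `W_n(R) → W_n(R[1/f])` is the localization map on each
of the `n` coordinates, a single power `[f] ^ k` clears the denominators of all coordinates of an
element of `W_n(R[1/f])` at once, and likewise kills the difference of two elements with the same
image; and `[f]` maps to the unit `[f / 1]`.
-/

open Filter

namespace WittVector

variable {p : ℕ} [Fact p.Prime] {R S : Type*} [CommRing R] [CommRing S]

theorem teichmuller_mul_eq_mk_of_invertible [Invertible (p : R)] (a : R) (x : WittVector p R) :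
    teichmuller p a * x = mk p fun i => a ^ p ^ i * x.coeff i := by
  refine (ghostMap.bijective_of_invertible p R).1 (funext fun k => ?_)
  simp only [map_mul, ghostMap_apply]
  rw [ghostComponent_teichmuller, ghostComponent_apply, ghostComponent_apply,
    aeval_wittPolynomial, aeval_wittPolynomial, Finset.mul_sum]
  refine Finset.sum_congr rfl fun i hi => ?_
  have hik : p ^ i * p ^ (k - i) = p ^ k := by
    rw [← pow_add, Nat.add_sub_cancel' (Nat.lt_succ_iff.mp (Finset.mem_range.mp hi))]
  rw [coeff_mk, mul_pow, ← pow_mul, hik]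
  ring

theorem coeff_teichmuller_mul_of_injective (φ : R →+* S) (hφ : Function.Injective φ)
    (h : ∀ (b : S) (y : WittVector p S) (i : ℕ),
      (teichmuller p b * y).coeff i = b ^ p ^ i * y.coeff i)
    (a : R) (x : WittVector p R) (i : ℕ) :
    (teichmuller p a * x).coeff i = a ^ p ^ i * x.coeff i := by
  apply hφ
  rw [← map_coeff, map_mul, map_teichmuller, h, map_coeff, map_mul, map_pow]

theorem coeff_teichmuller_mul_of_surjective (φ : R →+* S) (hφ : Function.Surjective φ)
    (h : ∀ (a : R) (x : WittVector p R) (i : ℕ),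
      (teichmuller p a * x).coeff i = a ^ p ^ i * x.coeff i)
    (b : S) (y : WittVector p S) (i : ℕ) :
    (teichmuller p b * y).coeff i = b ^ p ^ i * y.coeff i := by
  obtain ⟨a, rfl⟩ := hφ b
  obtain ⟨x, rfl⟩ := map_surjective φ hφ y
  rw [← map_teichmuller, ← map_mul, map_coeff, h, map_mul, map_pow, map_coeff]

theorem coeff_teichmuller_mul (a : R) (x : WittVector p R) (i : ℕ) :
    (teichmuller p a * x).coeff i = a ^ p ^ i * x.coeff i := by
  refine coeff_teichmuller_mul_of_surjective _ (MvPolynomial.counit_surjective R) ?_ a x i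
  refine coeff_teichmuller_mul_of_injective (MvPolynomial.map (Int.castRingHom ℚ))
    (MvPolynomial.map_injective _ Int.cast_injective) ?_
  intro b y j
  rw [teichmuller_mul_eq_mk_of_invertible, coeff_mk]

variable {n : ℕ}

theorem coeff_truncate_teichmuller_mul (a : R) (x : TruncatedWittVector p n R) (i : Fin n) :
    (truncate n (teichmuller p a) * x).coeff i = a ^ p ^ (i : ℕ) * x.coeff i := by
  obtain ⟨x, rfl⟩ := truncate_surjective (p := p) n R x
  rw [← map_mul, coeff_truncate, coeff_teichmuller_mul, coeff_truncate]

end WittVector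

namespace IsLocalization.Away

variable {R S : Type*} [CommRing R] [CommRing S] [Algebra R S] (f : R) [IsLocalization.Away f S]

theorem eventually_exists_mul_pow_eq (z : S) :
    ∀ᶠ k in atTop, ∃ a : R, z * algebraMap R S f ^ k = algebraMap R S a := by
  obtain ⟨m, a, ha⟩ := surj f z
  filter_upwards [eventually_ge_atTop m] with k hk
  refine ⟨f ^ (k - m) * a, ?_⟩
  rw [map_mul, ← ha, map_pow, ← Nat.sub_add_cancel hk, pow_add, Nat.add_sub_cancel]
  ring

theorem eventually_pow_mul_eq {a b : R} (h : algebraMap R S a = algebraMap R S b) :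
    ∀ᶠ k in atTop, f ^ k * a = f ^ k * b := by
  obtain ⟨m, hm⟩ := exists_of_eq f h
  filter_upwards [eventually_ge_atTop m] with k hk
  rw [← Nat.sub_add_cancel hk, pow_add, mul_assoc, mul_assoc, hm]

end IsLocalization.Away

section twMap

variable {p : ℕ} [hp : Fact p.Prime] {R S : Type*} [CommRing R] [CommRing S] {n : ℕ}

theorem twMap_truncate (g : R →+* S) (x : WittVector p R) :
    twMap n g (truncate n x) = truncate n (WittVector.map g x) :=
  RingHom.liftOfRightInverse_comp_apply _ _
    (fun y => TruncatedWittVector.truncateFun_out (p := p) y) _ x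

theorem coeff_twMap (g : R →+* S) (x : TruncatedWittVector p n R) (i : Fin n) :
    (twMap n g x).coeff i = g (x.coeff i) := by
  obtain ⟨x, rfl⟩ := truncate_surjective (p := p) n R x
  rw [twMap_truncate, coeff_truncate, coeff_truncate, map_coeff]

theorem twMap_truncate_teichmuller (g : R →+* S) (a : R) :
    twMap n g (truncate n (teichmuller p a)) = truncate n (teichmuller p (g a)) := by
  rw [twMap_truncate, map_teichmuller]

variable [Algebra R S] (f : R) [IsLocalization.Away f S]

theorem exists_mul_truncate_teichmuller_pow_eq_twMap (z : TruncatedWittVector p n S) :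
    ∃ (k : ℕ) (x : TruncatedWittVector p n R),
      z * truncate n (teichmuller p (algebraMap R S f)) ^ k = twMap n (algebraMap R S) x := by
  have hz (i : Fin n) : ∀ᶠ k in atTop,
      ∃ a : R, z.coeff i * algebraMap R S f ^ (p ^ (i : ℕ) * k) = algebraMap R S a :=
    (tendsto_id.const_mul_atTop' (pow_pos hp.out.pos _)).eventually
      (IsLocalization.Away.eventually_exists_mul_pow_eq f (z.coeff i))
  obtain ⟨k, hk⟩ := (eventually_all.2 hz).exists
  choose a ha using hk
  refine ⟨k, TruncatedWittVector.mk p a, TruncatedWittVector.ext fun i => ?_⟩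
  rw [← map_pow, ← map_pow, mul_comm, coeff_truncate_teichmuller_mul, coeff_twMap,
    TruncatedWittVector.coeff_mk, ← ha i, ← pow_mul', mul_comm]

theorem exists_truncate_teichmuller_pow_mul_eq_of_twMap_eq {x y : TruncatedWittVector p n R}
    (h : twMap n (algebraMap R S) x = twMap n (algebraMap R S) y) :
    ∃ k : ℕ, truncate n (teichmuller p f) ^ k * x = truncate n (teichmuller p f) ^ k * y := by
  have hxy (i : Fin n) : ∀ᶠ k in atTop,
      f ^ (p ^ (i : ℕ) * k) * x.coeff i = f ^ (p ^ (i : ℕ) * k) * y.coeff i := by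
    refine (tendsto_id.const_mul_atTop' (pow_pos hp.out.pos _)).eventually
      (IsLocalization.Away.eventually_pow_mul_eq (S := S) f ?_)
    rw [← coeff_twMap, ← coeff_twMap, h]
  obtain ⟨k, hk⟩ := (eventually_all.2 hxy).exists
  refine ⟨k, TruncatedWittVector.ext fun i => ?_⟩
  rw [← map_pow, ← map_pow, coeff_truncate_teichmuller_mul, coeff_truncate_teichmuller_mul,
    ← pow_mul', hk i]

end twMap

/-- `W_n(R[1/f])` is the localization of `W_n(R)` away from the Teichmüller lift `[f]`. -/
theorem truncatedWittVector_localization_away (p : ℕ) [hp : Fact p.Prime]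
    (R : Type*) [CommRing R] (f : R) (n : ℕ) :
    letI : Algebra (TruncatedWittVector p n R)
        (TruncatedWittVector p n (Localization.Away f)) :=
      (twMap n (algebraMap R (Localization.Away f))).toAlgebra
    IsLocalization.Away
      (WittVector.truncate n (WittVector.teichmuller p f))
      (TruncatedWittVector p n (Localization.Away f)) := by
  let _ : Algebra (TruncatedWittVector p n R)
      (TruncatedWittVector p n (Localization.Away f)) :=
    (twMap n (algebraMap R (Localization.Away f))).toAlgebra
  have halg : algebraMap _ (TruncatedWittVector p n (Localization.Away f))
      (truncate n (teichmuller p f)) = truncate n (teichmuller p (algebraMap R _ f)) :=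
    twMap_truncate_teichmuller _ f
  refine IsLocalization.Away.mk _ ?_ (fun z => ?_) (fun x y => ?_)
  · rw [halg]
    exact ((IsLocalization.Away.algebraMap_isUnit f).map _).map _
  · rw [halg]
    exact exists_mul_truncate_teichmuller_pow_eq_twMap f z
  · exact exists_truncate_teichmuller_pow_mul_eq_of_twMap_eq f
end

section
/- Let k be a perfect field of characteristic p, and let F : W(k) → W(k) be the Witt vector Frobenius automorphism. For a sequence (a_n) in W(k) which arises as the ghost components of a single Witt vector X ∈ W(W(k)), the image of X under the map W(pr_0) : W(W(k)) → W(k) induced by the zeroth component projection pr_0 : W(k) → k equals lim_{n→∞} F^{−n}(a_n) in the p-adic topology of W(k). -/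
/-!
Write `X = [x₀] + V Y` in `W(W(k))`. Then `gh_{n+1} X = x₀ ^ p ^ (n+1) + p · gh_n Y` and
`W(pr₀) X = [pr₀ x₀] + V (W(pr₀) Y)`, while on `W(k)` one has `V = p · F⁻¹`. The Teichmüller parts
agree modulo `p ^ (n+2)`, since `x ≡ [pr₀ x] mod p` implies `x ^ p ^ n ≡ [pr₀ x] ^ p ^ n mod p ^ (n+1)`
(applied to `x = F^{-(n+1)} x₀`), and the Verschiebung parts agree modulo `p ^ (n+1)` by induction.
Hence `W(pr₀) X ≡ F^{-n}(gh_n X) mod p ^ n` for every `n`.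
-/

namespace WittVector

variable {p : ℕ} [Fact p.Prime] {R : Type*} [CommRing R]

theorem eq_teichmuller_add_verschiebung (x : WittVector p R) :
    x = teichmuller p (x.coeff 0) + verschiebung (mk p fun n => x.coeff (n + 1)) := by
  ext n
  rw [coeff_add_of_disjoint]
  · cases n <;> simp [teichmuller_coeff_pos]
  · rintro (_ | n) <;> simp [teichmuller_coeff_pos]

variable [CharP R p] [PerfectRing R p]

theorem verschiebung_eq_p_mul_frobeniusEquiv_symm (x : WittVector p R) :
    verschiebung x = p * (frobeniusEquiv p R).symm x := by
  calc verschiebung x = verschiebung (frobenius ((frobeniusEquiv p R).symm x)) := by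
        rw [← frobeniusEquiv_apply, RingEquiv.apply_symm_apply]
    _ = p * (frobeniusEquiv p R).symm x := by rw [verschiebung_frobenius, mul_comm]

theorem p_dvd_sub_teichmuller_coeff_zero (x : WittVector p R) :
    (p : WittVector p R) ∣ x - teichmuller p (x.coeff 0) := by
  rw [sub_eq_iff_eq_add'.mpr (eq_teichmuller_add_verschiebung x),
    verschiebung_eq_p_mul_frobeniusEquiv_symm]
  exact dvd_mul_right _ _

theorem coeff_zero_iterate_frobeniusEquiv_symm_pow (n : ℕ) (x : WittVector p R) :
    ((⇑(frobeniusEquiv p R).symm)^[n] x).coeff 0 ^ p ^ n = x.coeff 0 := by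
  rw [← iterate_frobenius_coeff, ← frobeniusEquiv_apply,
    Function.RightInverse.iterate (frobeniusEquiv p R).apply_symm_apply n x]

theorem pow_dvd_teichmuller_coeff_zero_sub_iterate_frobeniusEquiv_symm (n : ℕ)
    (x : WittVector p R) :
    (p : WittVector p R) ^ (n + 1) ∣
      teichmuller p (x.coeff 0) - (⇑(frobeniusEquiv p R).symm)^[n] (x ^ p ^ n) := by
  set z := (⇑(frobeniusEquiv p R).symm)^[n] x
  have hz : teichmuller p (x.coeff 0) = teichmuller p (z.coeff 0) ^ p ^ n := by
    rw [← map_pow, coeff_zero_iterate_frobeniusEquiv_symm_pow]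
  rw [hz, iterate_map_pow, ← dvd_neg, neg_sub]
  exact dvd_sub_pow_of_dvd_sub (p_dvd_sub_teichmuller_coeff_zero z) n

theorem pow_dvd_map_constantCoeff_sub_iterate_frobeniusEquiv_symm_ghostComponent (n : ℕ)
    (X : WittVector p (WittVector p R)) :
    (p : WittVector p R) ^ n ∣
      map constantCoeff X - (⇑(frobeniusEquiv p R).symm)^[n] (ghostComponent n X) := by
  induction n generalizing X with
  | zero => simp
  | succ n ih =>
    obtain ⟨Y, hX⟩ : ∃ Y, X = teichmuller p (X.coeff 0) + verschiebung Y :=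
      ⟨_, eq_teichmuller_add_verschiebung X⟩
    generalize X.coeff 0 = x₀ at hX
    subst hX
    have hcomm : Function.Commute (frobeniusEquiv p R).symm ((p : WittVector p R) * ·) :=
      fun z => by simp only [map_mul, map_natCast]
    have hsplit : map constantCoeff (teichmuller p x₀ + verschiebung Y)
          - (⇑(frobeniusEquiv p R).symm)^[n + 1]
            (ghostComponent (n + 1) (teichmuller p x₀ + verschiebung Y))
        = (teichmuller p (x₀.coeff 0) - (⇑(frobeniusEquiv p R).symm)^[n + 1] (x₀ ^ p ^ (n + 1)))
          + p * (frobeniusEquiv p R).symm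
            (map constantCoeff Y - (⇑(frobeniusEquiv p R).symm)^[n] (ghostComponent n Y)) := by
      rw [map_add, map_add, ghostComponent_teichmuller, ghostComponent_verschiebung,
        map_teichmuller, map_verschiebung, constantCoeff_apply,
        verschiebung_eq_p_mul_frobeniusEquiv_symm, iterate_map_add,
        hcomm.iterate_left (n + 1), Function.iterate_succ_apply' _ n (ghostComponent n Y),
        map_sub]
      ring
    obtain ⟨c, hc⟩ := ih Y
    rw [hsplit, hc, map_mul, map_pow, map_natCast, ← mul_assoc, ← pow_succ']
    exact dvd_add ((pow_dvd_pow _ n.succ.le_succ).trans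
      (pow_dvd_teichmuller_coeff_zero_sub_iterate_frobeniusEquiv_symm (n + 1) x₀))
      (dvd_mul_right _ _)

end WittVector

/-- Let `k` be a perfect field of characteristic `p`. If `X ∈ W(W(k))` has ghost
components `(a_n)`, then the image of `X` under `W(pr₀) : W(W(k)) → W(k)` is the
`p`-adic limit of the sequence `F^{-n}(a_n)` in `W(k)`. -/
theorem wittVector_projection_eq_limit (p : ℕ) [hp : Fact p.Prime]
    (k : Type*) [Field k] [CharP k p] [PerfectRing k p]
    (X : WittVector p (WittVector p k)) (a : ℕ → WittVector p k)
    (ha : ∀ n : ℕ, WittVector.ghostComponent n X = a n) :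
    ∀ m : ℕ, ∃ N : ℕ, ∀ n ≥ N, ∃ y : WittVector p k,
      WittVector.map (WittVector.constantCoeff) X
          - (⇑(WittVector.frobeniusEquiv p k).symm)^[n] (a n)
        = (p : WittVector p k) ^ m * y := by
  intro m
  refine ⟨m, fun n hn => ?_⟩
  rw [← ha n]
  exact (pow_dvd_pow _ hn).trans
    (WittVector.pow_dvd_map_constantCoeff_sub_iterate_frobeniusEquiv_symm_ghostComponent n X)
end

section
/- Let k be a perfect field of characteristic p and let W(k) be its Witt vectors. The projection map W(W(k)) → W(k) given by applying W to the zeroth-component projection pr_0 : W(k) → k is a surjective ring homomorphism whose composition with the Teichmüller-type section can be described on ghost coordinates: for X ∈ W(W(k)) with ghost components ⟨a_0, a_1, a_2, …⟩ ∈ W(k)^ℕ, one has W(pr_0)(X) ≡ F^{-n}(a_n) (mod p^{n+1} W(k)) for every n ≥ 0. -/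
open WittVector Function Finset

namespace WittProjAux

variable {p : ℕ} [hp : Fact p.Prime]

local notation "𝕎" => WittVector p

section CommRing
variable {R : Type*} [CommRing R]

lemma iterate_verschiebung_coeff_lt (x : 𝕎 R) {n j : ℕ} (h : j < n) :
    (verschiebung^[n] x).coeff j = 0 := by
  induction n generalizing j with
  | zero => omega
  | succ n ih =>
    rw [Function.iterate_succ_apply']
    cases j with
    | zero => exact verschiebung_coeff_zero _
    | succ j => rw [verschiebung_coeff_succ]; exact ih (by omega)

lemma coeff_iter_versch_teich (c : R) (i j : ℕ) :
    (verschiebung^[i] (teichmuller p c)).coeff j = if j = i then c else 0 := by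
  rcases lt_trichotomy j i with h | rfl | h
  · rw [iterate_verschiebung_coeff_lt _ h, if_neg h.ne]
  · have := iterate_verschiebung_coeff (teichmuller p c) j 0
    simpa using this
  · obtain ⟨m, rfl⟩ := Nat.exists_eq_add_of_lt h
    have h2 := iterate_verschiebung_coeff (teichmuller p c) i (m + 1)
    rw [show i + m + 1 = m + 1 + i by ring, h2,
      teichmuller_coeff_pos (p := p) c (m + 1) (Nat.succ_pos m), if_neg (by omega)]

/-- partial Teichmüller sum -/
noncomputable def tsum (x : 𝕎 R) (n : ℕ) : 𝕎 R :=
  ∑ i ∈ range n, verschiebung^[i] (teichmuller p (x.coeff i))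

lemma coeff_tsum (x : 𝕎 R) (n : ℕ) : ∀ j,
    (tsum x n).coeff j = if j < n then x.coeff j else 0 := by
  induction n with
  | zero => intro j; simp [tsum]
  | succ n ih =>
    intro j
    have hdis : ∀ m, (tsum x n).coeff m = 0 ∨
        (verschiebung^[n] (teichmuller p (x.coeff n))).coeff m = 0 := by
      intro m
      rcases lt_or_ge m n with h | h
      · right; rw [coeff_iter_versch_teich, if_neg (by omega)]
      · left; rw [ih m, if_neg (not_lt.mpr h)]
    have hsplit : tsum x (n + 1)
        = tsum x n + verschiebung^[n] (teichmuller p (x.coeff n)) :=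
      Finset.sum_range_succ _ _
    rw [hsplit, coeff_add_of_disjoint _ _ _ hdis, ih j, coeff_iter_versch_teich]
    rcases lt_trichotomy j n with h | rfl | h
    · rw [if_pos h, if_neg (by omega), if_pos (by omega), add_zero]
    · rw [if_neg (lt_irrefl _), if_pos rfl, if_pos (by omega), zero_add]
    · rw [if_neg (by omega), if_neg (by omega), if_neg (by omega), add_zero]

variable [CharP R p]

lemma iter_versch_iter_frob (m : ℕ) (b : 𝕎 R) :
    verschiebung^[m] (frobenius^[m] b) = (p : 𝕎 R) ^ m * b := by
  induction m generalizing b with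
  | zero => simp
  | succ m ih =>
    rw [Function.iterate_succ_apply' (f := verschiebung),
      Function.iterate_succ_apply (f := frobenius), ih,
      show (p : 𝕎 R) ^ m * frobenius b = frobenius ((p : 𝕎 R) ^ m * b) by
        rw [map_mul, map_pow, map_natCast],
      verschiebung_frobenius]
    ring

lemma iter_frob_teich (c : R) (m : ℕ) :
    frobenius^[m] (teichmuller p c) = teichmuller p (c ^ p ^ m) := by
  induction m with
  | zero => simp
  | succ m ih =>
    rw [Function.iterate_succ_apply', ih, frobenius_eq_map_frobenius, map_teichmuller,
      frobenius_def, ← pow_mul, ← pow_succ]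

variable [PerfectRing R p]

lemma pow_p_dvd_of_coeff_eq_zero {x : 𝕎 R} {n : ℕ} (h : ∀ i < n, x.coeff i = 0) :
    (p : 𝕎 R) ^ n ∣ x := by
  obtain ⟨b, hb⟩ := (frobenius_bijective p R).surjective.iterate n (x.shift n)
  exact ⟨b, by rw [eq_iterate_verschiebung h, ← hb, iter_versch_iter_frob]⟩

lemma p_dvd_sub_teich (x : 𝕎 R) :
    (p : 𝕎 R) ∣ x - teichmuller p (x.coeff 0) := by
  have := pow_p_dvd_of_coeff_eq_zero (x := x - teichmuller p (x.coeff 0)) (n := 1) ?_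
  · simpa using this
  · intro j hj
    have hj0 : j = 0 := by omega
    subst hj0
    have := map_sub (constantCoeff (p := p)) x (teichmuller p (x.coeff 0))
    simpa using this

lemma pow_p_dvd_sub_tsum (x : 𝕎 R) (n : ℕ) :
    (p : 𝕎 R) ^ (n + 1) ∣ x - tsum x (n + 1) := by
  apply pow_p_dvd_of_coeff_eq_zero
  intro i hi
  have ht : truncate (n + 1) x = truncate (n + 1) (tsum x (n + 1)) := by
    ext j
    rw [coeff_truncate, coeff_truncate, coeff_tsum, if_pos j.2]
  have h2 : x - tsum x (n + 1) ∈ RingHom.ker (truncate (p := p) (n + 1)) := by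
    rw [RingHom.mem_ker, map_sub, ht, sub_self]
  exact (mem_ker_truncate _ _).mp h2 i hi

end CommRing

section Main

variable {k : Type*} [Field k] [CharP k p] [PerfectRing k p]

lemma main_congruence (X : 𝕎 (𝕎 k)) (n : ℕ) :
    (p : 𝕎 k) ^ (n + 1) ∣
      frobenius^[n] (map (constantCoeff : 𝕎 k →+* k) X) - ghostComponent n X := by
  set g : 𝕎 k := map (constantCoeff : 𝕎 k →+* k) X with hg
  set z : 𝕎 k := frobenius^[n] g with hzdef
  have hz : ∀ i, z.coeff i = ((X.coeff i).coeff 0) ^ p ^ n := by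
    intro i
    rw [hzdef, iterate_frobenius_coeff, hg, map_coeff]
    rfl
  have hterm : ∀ i ∈ range (n + 1),
      (p : 𝕎 k) ^ (n + 1) ∣
        (p : 𝕎 k) ^ i * (X.coeff i) ^ p ^ (n - i)
          - verschiebung^[i] (teichmuller p (z.coeff i)) := by
    intro i hi
    rw [Finset.mem_range] at hi
    have hVT : verschiebung^[i] (teichmuller p (z.coeff i))
        = (p : 𝕎 k) ^ i * teichmuller p (((X.coeff i).coeff 0) ^ p ^ (n - i)) := by
      rw [hz i, ← iter_versch_iter_frob i (teichmuller p (((X.coeff i).coeff 0) ^ p ^ (n - i))),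
        iter_frob_teich, ← pow_mul, ← pow_add, Nat.sub_add_cancel (by omega)]
    obtain ⟨d, hd⟩ := dvd_sub_pow_of_dvd_sub (p_dvd_sub_teich (X.coeff i)) (n - i)
    refine ⟨d, ?_⟩
    rw [hVT, show teichmuller p (((X.coeff i).coeff 0) ^ p ^ (n - i))
        = (teichmuller p ((X.coeff i).coeff 0)) ^ p ^ (n - i) from
      map_pow (teichmuller p) _ (p ^ (n - i)), ← mul_sub, hd,
      ← mul_assoc, ← pow_add]
    congr 2
    omega
  have hsum : (p : 𝕎 k) ^ (n + 1) ∣ ghostComponent n X - tsum z (n + 1) := by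
    have : ghostComponent n X - tsum z (n + 1)
        = ∑ i ∈ range (n + 1),
            ((p : 𝕎 k) ^ i * (X.coeff i) ^ p ^ (n - i)
              - verschiebung^[i] (teichmuller p (z.coeff i))) := by
      rw [Finset.sum_sub_distrib, ghostComponent_apply, aeval_wittPolynomial, tsum]
    rw [this]
    exact Finset.dvd_sum hterm
  have h1 := pow_p_dvd_sub_tsum z n
  have := dvd_sub h1 hsum
  simpa [hzdef] using this

lemma exists_ringhom_iterate {R : Type*} [CommRing R] (e : R ≃+* R) (n : ℕ) :
    ∃ f : R →+* R, ⇑f = (⇑e)^[n] := by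
  induction n with
  | zero => exact ⟨RingHom.id R, rfl⟩
  | succ n ih =>
    obtain ⟨f, hf⟩ := ih
    exact ⟨f.comp e.toRingHom, by
      funext x
      simp [hf, Function.iterate_succ_apply]⟩

end Main

end WittProjAux

open WittProjAux in
/-- For a perfect field `k` of characteristic `p`, the map
`W(pr₀) : W(W(k)) → W(k)` is a surjective ring homomorphism, and for `X ∈ W(W(k))`
with ghost components `(a_n)` one has `W(pr₀)(X) ≡ F^{-n}(a_n) (mod p^(n+1))` for all `n`. -/
theorem wittVector_projection_congruences (p : ℕ) [hp : Fact p.Prime]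
    (k : Type*) [Field k] [CharP k p] [PerfectRing k p] :
    Function.Surjective
      (⇑(WittVector.map (WittVector.constantCoeff : WittVector p k →+* k)) :
        WittVector p (WittVector p k) → WittVector p k) ∧
    ∀ (X : WittVector p (WittVector p k)) (a : ℕ → WittVector p k),
      (∀ n : ℕ, WittVector.ghostComponent n X = a n) →
      ∀ n : ℕ, ∃ y : WittVector p k,
        WittVector.map (WittVector.constantCoeff) X
            - (⇑(WittVector.frobeniusEquiv p k).symm)^[n] (a n)
          = (p : WittVector p k) ^ (n + 1) * y := by
  constructor
  · exact WittVector.map_surjective _ fun a => ⟨WittVector.teichmuller p a, rfl⟩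
  · intro X a ha n
    obtain ⟨w, hw⟩ := main_congruence X n
    obtain ⟨f, hf⟩ := exists_ringhom_iterate (WittVector.frobeniusEquiv p k).symm n
    refine ⟨f w, ?_⟩
    have hL : Function.LeftInverse (⇑(WittVector.frobeniusEquiv p k).symm)
        (⇑(WittVector.frobeniusEquiv p k)) := (WittVector.frobeniusEquiv p k).symm_apply_apply
    have hinv := (hL.iterate n) (WittVector.map (WittVector.constantCoeff) X)
    have hcoe : ⇑(WittVector.frobeniusEquiv p k) = WittVector.frobenius := rfl
    rw [hcoe] at hinv
    calc WittVector.map (WittVector.constantCoeff) X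
          - (⇑(WittVector.frobeniusEquiv p k).symm)^[n] (a n)
        = (⇑(WittVector.frobeniusEquiv p k).symm)^[n]
            (WittVector.frobenius^[n] (WittVector.map (WittVector.constantCoeff) X))
          - (⇑(WittVector.frobeniusEquiv p k).symm)^[n] (a n) := by rw [hinv]
      _ = f (WittVector.frobenius^[n] (WittVector.map (WittVector.constantCoeff) X)) - f (a n) := by
            rw [hf]
      _ = f (WittVector.frobenius^[n] (WittVector.map (WittVector.constantCoeff) X) - a n) := by
            rw [map_sub]
      _ = f ((p : WittVector p k) ^ (n + 1) * w) := by rw [← ha n, hw]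
      _ = (p : WittVector p k) ^ (n + 1) * f w := by rw [map_mul, map_pow, map_natCast]
end
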